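/- arXiv:2009.00696 — 2 statements merged into one kernel-verified Lean document; each statement's English description precedes it below -/
import Mathlib

section
/- Let S be a compact invariant set for the multiflow Φ of a differential inclusion, A an attractor in S, and R its dual repeller. Then the connecting region C(A,R) := S \ (A ∪ R) equals {x ∈ S | ω_S(x) ⊂ A and α_S(x) ⊂ R}. -/
open Set MeasureTheory Filter Topology

namespace DIncl

variable {E : Type*} [NormedAddCommGroup E] [NormedSpace ℝ E] [CompleteSpace E]

/-- Upper semicontinuity of a set-valued map on a set `D`. -/
def USCOn {α β : Type*} [PseudoMetricSpace α] [PseudoMetricSpace β]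
    (F : α → Set β) (D : Set α) : Prop :=
  ∀ x ∈ D, ∀ ε > 0, ∃ δ > 0, ∀ y ∈ D, dist y x < δ →
    F y ⊆ {z | ∃ w ∈ F x, dist z w < ε}

/-- The Filippov conditions on `D`: upper semicontinuous with compact, convex,
nonempty values. -/
def FilippovOn {α : Type*} [PseudoMetricSpace α] (F : α → Set E) (D : Set α) : Prop :=
  USCOn F D ∧ ∀ x ∈ D, IsCompact (F x) ∧ Convex ℝ (F x) ∧ (F x).Nonempty

/-- `x` is a solution of the differential inclusion `ẋ ∈ F x` on the set `I`,
staying in `X`: an absolutely continuous function whose a.e. derivative lies in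
`F (x t)`, encoded via the integral representation `x b = x a + ∫_a^b v`. -/
def IsSolOn (F : E → Set E) (X : Set E) (x : ℝ → E) (I : Set ℝ) : Prop :=
  (∀ t ∈ I, x t ∈ X) ∧
  ∃ v : ℝ → E,
    (∀ a ∈ I, ∀ b ∈ I, IntervalIntegrable v volume a b) ∧
    (∀ᵐ t ∂volume, t ∈ I → v t ∈ F (x t)) ∧
    (∀ a ∈ I, ∀ b ∈ I, x b = x a + ∫ t in a..b, v t)

/-- The solution multiflow `Φ(T,a)` of `ẋ ∈ F x` in `X`. -/
def mflow (F : E → Set E) (X : Set E) (T : ℝ) (a : E) : Set E :=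
  {b | ∃ x : ℝ → E, IsSolOn F X x (Icc 0 T) ∧ x 0 = a ∧ x T = b}

/-- `Φ(I,U)`. -/
def mflowSet (F : E → Set E) (X : Set E) (I : Set ℝ) (U : Set E) : Set E :=
  ⋃ t ∈ I, ⋃ a ∈ U, mflow F X t a

/-- Maximal invariant subset of `U`: points admitting a full-time orbit in `U`. -/
def maxInv (F : E → Set E) (U : Set E) : Set E :=
  {x | ∃ ψ : ℝ → E, IsSolOn F U ψ univ ∧ ψ 0 = x}

/-- `S` is invariant: every point of `S` has a full-time orbit staying in `S`. -/
def IsInvSet (F : E → Set E) (S : Set E) : Prop := S ⊆ maxInv F S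

/-- The restricted omega-limit set `ω_S(U)` (with `Φ^S = mflow F S`). -/
def omegaS (F : E → Set E) (S U : Set E) : Set E :=
  ⋂ t ∈ Ici (0:ℝ), closure (mflowSet F S (Ici t) U)

/-- `(Φ^S)^*(I,U)` for the dual (backward-time) multiflow. -/
def mflowDualSet (F : E → Set E) (S : Set E) (I : Set ℝ) (U : Set E) : Set E :=
  ⋃ t ∈ I, ⋃ a ∈ U, {b | a ∈ mflow F S (-t) b}

/-- The restricted alpha-limit set `α_S(U)`. -/
def alphaS (F : E → Set E) (S U : Set E) : Set E :=
  ⋂ t ∈ Iio (0:ℝ), closure (mflowDualSet F S (Iic t) U)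

/-- The interior of `U` relative to `X`. -/
def relInt (X U : Set E) : Set E := {x ∈ X | U ∈ nhdsWithin x X}

/-- The closure of `U` relative to `X`. -/
def relCl (X U : Set E) : Set E := closure U ∩ X

/-- `A` is an attractor in `S`: the `ω_S`-limit set of a neighborhood of itself in `S`. -/
def IsAttractorIn (F : E → Set E) (S A : Set E) : Prop :=
  A ⊆ S ∧ ∃ U, A ⊆ relInt S U ∧ U ⊆ S ∧ omegaS F S U = A

/-- `R` is a repeller in `S`: the `α_S`-limit set of a neighborhood of itself in `S`. -/
def IsRepellerIn (F : E → Set E) (S R : Set E) : Prop :=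
  R ⊆ S ∧ ∃ U, R ⊆ relInt S U ∧ U ⊆ S ∧ alphaS F S U = R

/-- The dual repeller of an attractor `A` in `S`. -/
def dualRep (F : E → Set E) (S A : Set E) : Set E :=
  {x ∈ S | ¬ omegaS F S {x} ⊆ A}

/-- The dual attractor of a repeller `R` in `S`. -/
def dualAtt (F : E → Set E) (S R : Set E) : Set E :=
  {x ∈ S | ¬ alphaS F S {x} ⊆ R}

end DIncl

open DIncl Set MeasureTheory Filter Topology

/-!
Every point of the neighbourhood `U` with `ω_S(U) = A` has its `ω_S`-limit in `A`, so `U`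
misses `R`. If `x ∉ A ∪ R` and some `z ∈ α_S(x)` had `ω_S(z) ⊆ A`, then by compactness all
orbits of `z` lie, from some time `t₀` on, in an open `V ⊇ A` with `V ∩ S ⊆ U`. Solutions
running from points near `z` to `x` in ever longer times converge on `[0, t₀]` to an orbit of
`z` (solution sets of Filippov inclusions are compact), hence pass through `U` at time `t₀`,
and `x ∈ ω_S(U) = A`. Conversely, every point of `ω_S(U)` is reached in any time `T` from a
point of `ω_S(U)`, so for `x ∈ A` the set `α_S(x)` meets `A ⊆ U`, and cannot lie in `R`.
-/

theorem exists_seq_tendsto_of_forall_mem_closure {α : Type*} [PseudoMetricSpace α]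
    {D : ℕ → Set α} {x : α} (h : ∀ m, x ∈ closure (D m)) :
    ∃ p : ℕ → α, (∀ m, p m ∈ D m) ∧ Tendsto p atTop (𝓝 x) := by
  choose p hpD hpx using fun m =>
    Metric.mem_closure_iff.1 (h m) (1 / ((m : ℝ) + 1)) Nat.one_div_pos_of_nat
  refine ⟨p, hpD, tendsto_iff_dist_tendsto_zero.2 <| squeeze_zero (fun _ => dist_nonneg)
    (fun m => (dist_comm _ _).trans_le (hpx m).le) tendsto_one_div_add_atTop_nhds_zero_nat⟩

namespace DIncl

open scoped NNReal

variable {E : Type*} [NormedAddCommGroup E]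

theorem exists_isOpen_inter_subset_of_subset_relInt {S U A : Set E} (h : A ⊆ relInt S U) :
    ∃ V, IsOpen V ∧ A ⊆ V ∧ V ∩ S ⊆ U :=
  ⟨interior {x | x ∈ S → x ∈ U}, isOpen_interior,
    fun _ ha => mem_interior_iff_mem_nhds.2 (mem_nhdsWithin_iff_eventually.1 (h ha).2),
    fun _ hx => interior_subset hx.1 hx.2⟩

variable [NormedSpace ℝ E] {F : E → Set E}

theorem FilippovOn.mono {D D' : Set E} (hF : FilippovOn F D') (h : D ⊆ D') :
    FilippovOn F D :=
  ⟨fun x hx ε hε => (hF.1 x (h hx) ε hε).imp fun _ ⟨hδ, hF'⟩ => ⟨hδ, fun y hy => hF' y (h hy)⟩,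
    fun x hx => hF.2 x (h hx)⟩

theorem FilippovOn.exists_norm_le {K : Set E} (hK : IsCompact K) (hF : FilippovOn F K) :
    ∃ M : ℝ≥0, ∀ p ∈ K, ∀ w ∈ F p, ‖w‖ ≤ M := by
  have hbdd : Bornology.IsBounded (⋃ p ∈ K, F p) := by
    refine hK.induction_on (p := fun s => Bornology.IsBounded (⋃ p ∈ s, F p)) (by simp)
      (fun s t hst ht => ht.subset (biUnion_subset_biUnion_left hst))
      (fun s t hs ht => by simpa only [biUnion_union] using hs.union ht) fun p hp => ?_
    obtain ⟨δ, hδ, hF'⟩ := hF.1 p hp 1 one_pos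
    refine ⟨K ∩ Metric.ball p δ, inter_mem_nhdsWithin K (Metric.ball_mem_nhds p hδ),
      ((hF.2 p hp).1.isBounded.thickening (δ := 1)).subset ?_⟩
    refine iUnion₂_subset fun q hq w hw => Metric.mem_thickening_iff.2 ?_
    exact hF' q hq.1 hq.2 hw
  obtain ⟨M, hM⟩ := isBounded_iff_forall_norm_le.1 hbdd
  exact ⟨M.toNNReal, fun p hp w hw =>
    (hM w (mem_biUnion hp hw)).trans (Real.le_coe_toNNReal M)⟩

section Solutions

variable {X Y : Set E} {y : ℝ → E}

theorem IsSolOn.mono {I J : Set ℝ} (hy : IsSolOn F X y J) (hIJ : I ⊆ J) (hXY : X ⊆ Y) :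
    IsSolOn F Y y I := by
  obtain ⟨hyX, v, hvint, hvF, hyv⟩ := hy
  exact ⟨fun t ht => hXY (hyX t (hIJ ht)), v, fun a ha b hb => hvint a (hIJ ha) b (hIJ hb),
    hvF.mono fun t ht htI => ht (hIJ htI), fun a ha b hb => hyv a (hIJ ha) b (hIJ hb)⟩

theorem IsSolOn.comp_const_add {I : Set ℝ} (hy : IsSolOn F X y I) (σ : ℝ) :
    IsSolOn F X (fun τ => y (σ + τ)) ((σ + ·) ⁻¹' I) := by
  obtain ⟨hyX, v, hvint, hvF, hyv⟩ := hy
  refine ⟨fun τ hτ => hyX _ hτ, fun τ => v (σ + τ), fun a ha b hb => ?_, ?_, fun a ha b hb => ?_⟩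
  · simpa using (hvint _ ha _ hb).comp_add_left σ
  · exact (measurePreserving_add_left volume σ).quasiMeasurePreserving.ae hvF
  · rw [intervalIntegral.integral_comp_add_left (fun t => v t) σ]
    exact hyv _ ha _ hb

theorem IsSolOn.mem_mflow {s σ τ : ℝ} (hy : IsSolOn F X y (Icc 0 s)) (hσ : 0 ≤ σ) (hτ : τ ≤ s) :
    y τ ∈ mflow F X (τ - σ) (y σ) := by
  refine ⟨fun r => y (σ + r), (hy.comp_const_add σ).mono (fun r hr => ?_) subset_rfl,
    by simp, by simp⟩
  exact ⟨by linarith [hr.1], by linarith [hr.2]⟩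

theorem IsSolOn.lipschitzOnWith {I : Set ℝ} [I.OrdConnected] {M : ℝ≥0}
    (hy : IsSolOn F X y I) (hM : ∀ p ∈ X, ∀ w ∈ F p, ‖w‖ ≤ M) : LipschitzOnWith M y I := by
  obtain ⟨hyX, v, -, hvF, hyv⟩ := hy
  refine LipschitzOnWith.of_dist_le_mul fun a ha b hb => ?_
  have hsub : uIoc b a ⊆ I := uIoc_subset_uIcc.trans (Set.OrdConnected.uIcc_subset ‹_› hb ha)
  rw [dist_eq_norm, hyv b hb a ha, add_sub_cancel_left, Real.dist_eq]
  refine intervalIntegral.norm_integral_le_of_norm_le_const_ae ?_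
  filter_upwards [hvF] with t ht htI
  exact hM _ (hyX t (hsub htI)) _ (ht (hsub htI))

end Solutions

theorem inv_smul_intervalIntegral_mem [CompleteSpace E] {v : ℝ → E} {C : Set E}
    (hC : Convex ℝ C) (hCc : IsClosed C) {t h : ℝ} (hh : 0 < h)
    (hv : IntervalIntegrable v volume t (t + h)) (hvC : ∀ᵐ s, s ∈ Ioc t (t + h) → v s ∈ C) :
    h⁻¹ • ∫ s in t..t + h, v s ∈ C := by
  have hvol : volume (Ioc t (t + h)) = ENNReal.ofReal h := by
    rw [Real.volume_Ioc, add_sub_cancel_left]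
  have havg : h⁻¹ • ∫ s in t..t + h, v s = ⨍ s in Ioc t (t + h), v s := by
    rw [setAverage_eq, measureReal_def, hvol, ENNReal.toReal_ofReal hh.le,
      intervalIntegral.integral_of_le (by linarith)]
  rw [havg]
  refine hC.set_average_mem hCc (by simpa [hvol] using hh) measure_Ioc_lt_top.ne ?_ hv.1
  exact (ae_restrict_iff' measurableSet_Ioc).2 hvC

theorem HasDerivAt.mem_of_forall_slope_mem {γ : ℝ → E} {L : E} {t h₀ : ℝ} {C : Set E}
    (hγ : HasDerivAt γ L t) (hC : IsClosed C) (hh₀ : 0 < h₀)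
    (hslope : ∀ h ∈ Ioc 0 h₀, h⁻¹ • (γ (t + h) - γ t) ∈ C) : L ∈ C :=
  hC.mem_of_tendsto hγ.tendsto_slope_zero_right (eventually_of_mem (Ioc_mem_nhdsGT hh₀) hslope)

section Lipschitz

variable [FiniteDimensional ℝ E] {K : ℝ≥0} {γ : ℝ → E}

theorem LipschitzWith.intervalIntegrable_deriv (hγ : LipschitzWith K γ) (a b : ℝ) :
    IntervalIntegrable (deriv γ) volume a b :=
  (intervalIntegrable_const (c := (K : ℝ))).mono_fun (aestronglyMeasurable_deriv γ _)
    (Eventually.of_forall fun _ => by simpa using norm_deriv_le_of_lipschitz hγ)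

theorem LipschitzWith.integral_deriv_eq_sub (hγ : LipschitzWith K γ) (a b : ℝ) :
    ∫ t in a..b, deriv γ t = γ b - γ a := by
  have hprim : LipschitzWith K fun x => ∫ t in a..x, deriv γ t := by
    refine LipschitzWith.of_dist_le_mul fun x x' => ?_
    rw [dist_eq_norm, intervalIntegral.integral_interval_sub_left
      (hγ.intervalIntegrable_deriv a x) (hγ.intervalIntegrable_deriv a x'), Real.dist_eq]
    exact intervalIntegral.norm_integral_le_of_norm_le_const
      fun t _ => norm_deriv_le_of_lipschitz hγ
  have hg_deriv :
      ∀ᵐ x, x ∈ uIcc a b → HasDerivAt (fun x => γ x - ∫ t in a..x, deriv γ t) 0 x := by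
    filter_upwards [hγ.ae_differentiableAt_real,
      (hγ.intervalIntegrable_deriv a b).ae_hasDerivAt_integral] with x hdiff hprim_deriv hx
    simpa using hdiff.hasDerivAt.fun_sub (hprim_deriv hx a left_mem_uIcc)
  obtain ⟨C, hC⟩ := ((hγ.sub hprim).lipschitzOnWith (s := uIcc a b)
    ).absolutelyContinuousOnInterval.const_of_ae_hasDerivAt_zero hg_deriv
  have hab := (hC b right_mem_uIcc).trans (hC a left_mem_uIcc).symm
  simp only [intervalIntegral.integral_same, sub_zero] at hab
  rw [← hab]
  abel

end Lipschitz

section Compactness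

variable {K : Set E} {T : ℝ} {ι : Type*}

theorem mem_of_hasDerivAt_of_tendsto_isSolOn [CompleteSpace E] (hF : FilippovOn F K)
    {M : ℝ≥0} (hM : ∀ p ∈ K, ∀ w ∈ F p, ‖w‖ ≤ M) {l : Filter ι} [l.NeBot]
    {ys : ι → ℝ → E} (hys : ∀ k, IsSolOn F K (ys k) (Icc 0 T)) {γ : ℝ → E}
    (hlim : ∀ t ∈ Icc 0 T, Tendsto (fun k => ys k t) l (𝓝 (γ t))) {t : ℝ} {L : E}
    (ht : t ∈ Ico 0 T) (hγt : γ t ∈ K) (hγ : HasDerivAt γ L t) : L ∈ F (γ t) := by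
  obtain ⟨hFc, hFconv, -⟩ := hF.2 _ hγt
  rw [← hFc.isClosed.closure_eq, Metric.closure_eq_iInter_cthickening]
  refine mem_iInter₂.2 fun ε hε => ?_
  obtain ⟨δ, hδ, hUSC⟩ := hF.1 _ hγt ε hε
  obtain ⟨h₀, hh₀, hMh₀⟩ := exists_pos_mul_lt (half_pos hδ) (M : ℝ)
  refine hγ.mem_of_forall_slope_mem Metric.isClosed_cthickening
    (lt_min hh₀ (sub_pos.2 ht.2)) fun h hh => ?_
  have htT : t ∈ Icc 0 T := Ico_subset_Icc_self ht
  have hthT : t + h ∈ Icc 0 T :=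
    ⟨by linarith [ht.1, hh.1], by linarith [hh.2.trans (min_le_right _ _)]⟩
  -- For `k` large along `l`, `ys k` stays `δ`-close to `γ t` on `[t, t + h]` by the uniform
  -- Lipschitz bound, so its velocities, whose average is its slope, lie near `F (γ t)`.
  have hslope : ∀ᶠ k in l, h⁻¹ • (ys k (t + h) - ys k t) ∈ Metric.cthickening ε (F (γ t)) := by
    filter_upwards [Metric.tendsto_nhds.1 (hlim t htT) (δ / 2) (half_pos hδ)] with k hk
    obtain ⟨hkK, v, hvint, hvF, hyv⟩ := hys k
    rw [hyv t htT (t + h) hthT, add_sub_cancel_left]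
    refine inv_smul_intervalIntegral_mem (hFconv.cthickening ε) Metric.isClosed_cthickening hh.1
      (hvint t htT (t + h) hthT) ?_
    filter_upwards [hvF] with s hs hsI
    have hsT : s ∈ Icc 0 T := ⟨by linarith [ht.1, hsI.1], hsI.2.trans hthT.2⟩
    have hclose : dist (ys k s) (γ t) < δ :=
      calc dist (ys k s) (γ t) ≤ dist (ys k s) (ys k t) + dist (ys k t) (γ t) :=
            dist_triangle _ _ _
        _ < M * h₀ + δ / 2 := by
            refine add_lt_add_of_le_of_lt ?_ hk
            refine ((hys k).lipschitzOnWith hM |>.dist_le_mul s hsT t htT).trans ?_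
            rw [Real.dist_eq, abs_of_pos (by linarith [hsI.1])]
            exact mul_le_mul_of_nonneg_left (by linarith [hsI.2, hh.2.trans (min_le_left _ _)])
              M.2
        _ < δ := by linarith
    obtain ⟨w, hw, hdist⟩ := hUSC _ (hkK s hsT) hclose (hs hsT)
    exact Metric.mem_cthickening_of_dist_le _ w ε _ hw hdist.le
  exact Metric.isClosed_cthickening.mem_of_tendsto
    (((hlim _ hthT).sub (hlim t htT)).const_smul h⁻¹) hslope

theorem exists_isSolOn_tendsto [FiniteDimensional ℝ E] (hK : IsCompact K) (hF : FilippovOn F K)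
    (hT : 0 ≤ T) (ys : ι → ℝ → E) (hys : ∀ k, IsSolOn F K (ys k) (Icc 0 T))
    (𝒰 : Ultrafilter ι) :
    ∃ γ : ℝ → E, IsSolOn F K γ (Icc 0 T) ∧
      ∀ t ∈ Icc 0 T, Tendsto (fun k => ys k t) 𝒰 (𝓝 (γ t)) := by
  obtain ⟨M, hM⟩ := hF.exists_norm_le hK
  set zs : ι → ℝ → E := fun k t => ys k (projIcc 0 T hT t)
  have hzs_lip : ∀ k, LipschitzWith M (zs k) := fun k => by
    have h := ((hys k).lipschitzOnWith hM).to_restrict.comp (LipschitzWith.projIcc hT)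
    rwa [mul_one] at h
  have hlim : ∀ t, ∃ p ∈ K, Tendsto (fun k => zs k t) 𝒰 (𝓝 p) := fun t =>
    hK.ultrafilter_le_nhds' (𝒰.map fun k => zs k t)
      (Ultrafilter.mem_map.2 (univ_mem' fun k => (hys k).1 _ (Subtype.mem _)))
  choose γ hγK hγ using hlim
  have hγ_Icc : ∀ t ∈ Icc 0 T, Tendsto (fun k => ys k t) 𝒰 (𝓝 (γ t)) := fun t ht => by
    simpa [zs, projIcc_of_mem hT ht] using hγ t
  have hγ_lip : LipschitzWith M γ :=
    (isClosed_setOfPred_lipschitzWith M).mem_of_tendsto (tendsto_pi_nhds.2 hγ)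
      (Eventually.of_forall hzs_lip)
  refine ⟨γ, ⟨fun t _ => hγK t, deriv γ, fun a _ b _ => hγ_lip.intervalIntegrable_deriv a b,
    ?_, fun a _ b _ => by rw [hγ_lip.integral_deriv_eq_sub]; abel⟩, hγ_Icc⟩
  filter_upwards [hγ_lip.ae_differentiableAt_real, volume.ae_ne T] with t hdiff htT ht
  exact mem_of_hasDerivAt_of_tendsto_isSolOn hF hM hys hγ_Icc ⟨ht.1, ht.2.lt_of_ne htT⟩ (hγK t)
    hdiff.hasDerivAt

end Compactness

section LimitSets

variable {S U : Set E}

theorem mem_mflowSet {I : Set ℝ} {b : E} :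
    b ∈ mflowSet F S I U ↔ ∃ t ∈ I, ∃ a ∈ U, b ∈ mflow F S t a := by
  simp [mflowSet]

theorem mem_mflowDualSet_singleton {I : Set ℝ} {b x : E} :
    b ∈ mflowDualSet F S I {x} ↔ ∃ t ∈ I, x ∈ mflow F S (-t) b := by
  simp [mflowDualSet]

theorem mflowSet_mono {I J : Set ℝ} (h : I ⊆ J) : mflowSet F S I U ⊆ mflowSet F S J U :=
  iUnion₂_mono' fun t ht => ⟨t, h ht, subset_rfl⟩

theorem mflowSet_subset {I : Set ℝ} (hI : I ⊆ Ici 0) : mflowSet F S I U ⊆ S := by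
  intro b hb
  obtain ⟨t, ht, a, -, y, hy, -, rfl⟩ := mem_mflowSet.1 hb
  exact hy.1 t ⟨hI ht, le_rfl⟩

theorem mflowDualSet_subset {I : Set ℝ} (hI : I ⊆ Iic 0) : mflowDualSet F S I U ⊆ S := by
  intro b hb
  simp only [mflowDualSet, mem_iUnion] at hb
  obtain ⟨t, ht, a, -, y, hy, rfl, -⟩ := hb
  exact hy.1 0 ⟨le_rfl, neg_nonneg.2 (hI ht)⟩

theorem omegaS_mono {U' : Set E} (h : U ⊆ U') : omegaS F S U ⊆ omegaS F S U' :=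
  iInter₂_mono fun _ _ => closure_mono <| iUnion₂_mono fun _ _ => biUnion_subset_biUnion_left h

theorem isCompact_omegaS (hS : IsCompact S) : IsCompact (omegaS F S U) :=
  hS.of_isClosed_subset (isClosed_biInter fun _ _ => isClosed_closure) fun _ hx =>
    hS.isClosed.closure_subset_iff.2 (mflowSet_subset subset_rfl) (mem_iInter₂.1 hx 0 self_mem_Ici)

theorem alphaS_subset (hS : IsClosed S) : alphaS F S U ⊆ S := fun _ hx =>
  hS.closure_subset_iff.2 (mflowDualSet_subset (Iic_subset_Iic.2 (by norm_num)))
    (mem_iInter₂.1 hx (-1) (by norm_num))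

theorem exists_closure_mflowSet_subset (hS : IsCompact S) {V : Set E} (hV : IsOpen V)
    (hUV : omegaS F S U ⊆ V) : ∃ t₀ ≥ 0, closure (mflowSet F S (Ici t₀) U) ⊆ V := by
  have : Nonempty (Ici (0 : ℝ)) := nonempty_Ici.to_subtype
  obtain ⟨⟨t₀, ht₀⟩, h⟩ := exists_subset_nhds_of_isCompact
    (V := fun t : Ici (0 : ℝ) => closure (mflowSet F S (Ici (t : ℝ)) U))
    (Antitone.directed_ge fun _ _ hst => closure_mono (mflowSet_mono (Ici_subset_Ici.2 hst)))
    (fun t => hS.of_isClosed_subset isClosed_closure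
      (hS.isClosed.closure_subset_iff.2 (mflowSet_subset (Ici_subset_Ici.2 t.2))))
    (fun x hx => hV.mem_nhds (hUV (by rwa [omegaS, biInter_eq_iInter])))
  exact ⟨t₀, ht₀, h⟩

end LimitSets

section Dynamics

variable [FiniteDimensional ℝ E] {S U : Set E}

theorem mem_omegaS_of_mem_alphaS (hS : IsCompact S) (hF : FilippovOn F S) {x z : E}
    (hz : z ∈ alphaS F S {x}) {V : Set E} (hV : IsOpen V) (hzV : omegaS F S {z} ⊆ V)
    (hVU : V ∩ S ⊆ U) : x ∈ omegaS F S U := by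
  obtain ⟨t₀, ht₀, htail⟩ := exists_closure_mflowSet_subset hS hV hzV
  obtain ⟨p, hpD, hpz⟩ := exists_seq_tendsto_of_forall_mem_closure fun m : ℕ =>
    mem_iInter₂.1 hz (-(t₀ + m + 1)) (by simp only [mem_Iio, neg_lt_zero]; positivity)
  simp only [mem_mflowDualSet_singleton, mem_Iic, mflow, mem_ofPred_eq] at hpD
  choose τ hτ ys hys hys0 hysx using hpD
  set 𝒰 := Ultrafilter.of (atTop : Filter ℕ)
  have h𝒰 : (𝒰 : Filter ℕ) ≤ atTop := Ultrafilter.of_le atTop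
  obtain ⟨γ, hγ, hγlim⟩ := exists_isSolOn_tendsto hS hF ht₀ ys
    (fun m => (hys m).mono (Icc_subset_Icc_right (by linarith [hτ m, m.cast_nonneg (α := ℝ)]))
      subset_rfl) 𝒰
  have hγ0 : γ 0 = z := tendsto_nhds_unique (hγlim 0 ⟨le_rfl, ht₀⟩)
    (by simpa only [hys0] using hpz.mono_left h𝒰)
  have hγt₀ : γ t₀ ∈ V :=
    htail (subset_closure (mem_mflowSet.2 ⟨t₀, self_mem_Ici, z, rfl, γ, hγ, hγ0, rfl⟩))
  refine mem_iInter₂.2 fun s _ => subset_closure ?_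
  obtain ⟨m, hmV, hms⟩ := (((hγlim t₀ ⟨ht₀, le_rfl⟩).eventually (hV.mem_nhds hγt₀)).and
    ((tendsto_natCast_atTop_atTop.eventually_ge_atTop s).filter_mono h𝒰)).exists
  have hmτ : t₀ + m + 1 ≤ -τ m := by linarith [hτ m]
  refine mem_mflowSet.2 ⟨-τ m - t₀, by simp only [mem_Ici]; linarith, ys m t₀,
    hVU ⟨hmV, (hys m).1 t₀ ⟨ht₀, by linarith [m.cast_nonneg (α := ℝ)]⟩⟩, ?_⟩
  simpa only [hysx] using (hys m).mem_mflow ht₀ le_rfl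

theorem exists_mem_mflow_of_mem_omegaS (hS : IsCompact S) (hF : FilippovOn F S) {x : E}
    (hx : x ∈ omegaS F S U) {T : ℝ} (hT : 0 ≤ T) : ∃ w ∈ omegaS F S U, x ∈ mflow F S T w := by
  obtain ⟨p, hpD, hpx⟩ := exists_seq_tendsto_of_forall_mem_closure fun m : ℕ =>
    mem_iInter₂.1 hx (m + T) (by simp only [mem_Ici]; positivity)
  simp only [mem_mflowSet, mem_Ici, mflow, mem_ofPred_eq] at hpD
  choose s hs u hu ys hys hys0 hysp using hpD
  set 𝒰 := Ultrafilter.of (atTop : Filter ℕ)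
  have h𝒰 : (𝒰 : Filter ℕ) ≤ atTop := Ultrafilter.of_le atTop
  obtain ⟨γ, hγ, hγlim⟩ := exists_isSolOn_tendsto hS hF hT (fun m τ => ys m (s m - T + τ))
    (fun m => ((hys m).comp_const_add (s m - T)).mono
      (fun τ hτ => ⟨by linarith [hτ.1, hs m, m.cast_nonneg (α := ℝ)], by linarith [hτ.2]⟩)
      subset_rfl) 𝒰
  have hγT : γ T = x := tendsto_nhds_unique (hγlim T ⟨hT, le_rfl⟩)
    (by simpa only [sub_add_cancel, hysp] using hpx.mono_left h𝒰)
  refine ⟨γ 0, mem_iInter₂.2 fun r _ => mem_closure_of_tendsto (hγlim 0 ⟨le_rfl, hT⟩) ?_,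
    γ, hγ, rfl, hγT⟩
  filter_upwards [(tendsto_natCast_atTop_atTop.eventually_ge_atTop r).filter_mono h𝒰] with m hm
  refine mem_mflowSet.2 ⟨s m - T, by simp only [mem_Ici]; linarith [hs m], u m, hu m, ?_⟩
  simpa only [add_zero, sub_zero, hys0] using
    (hys m).mem_mflow le_rfl (by linarith [hs m, m.cast_nonneg (α := ℝ)])

theorem exists_mem_omegaS_mem_alphaS (hS : IsCompact S) (hF : FilippovOn F S) {x : E}
    (hx : x ∈ omegaS F S U) : ∃ z ∈ omegaS F S U, z ∈ alphaS F S {x} := by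
  choose w hw hxw using fun T : ℕ => exists_mem_mflow_of_mem_omegaS hS hF hx T.cast_nonneg
  obtain ⟨z, hz, hclus⟩ := (isCompact_omegaS (F := F) (U := U) hS).exists_mapClusterPt
    (f := atTop) (tendsto_principal.2 (Eventually.of_forall hw))
  refine ⟨z, hz, mem_iInter₂.2 fun t _ => hclus.mem_closure_of_mem _ (mem_map.2 ?_)⟩
  filter_upwards [tendsto_natCast_atTop_atTop.eventually_ge_atTop (-t)] with T hT
  exact mem_mflowDualSet_singleton.2 ⟨-T, by simp only [mem_Iic]; linarith, by simpa using hxw T⟩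

end Dynamics

end DIncl

theorem connecting_region_eq_general {n : ℕ} (X : Set (Fin n → ℝ))
    (F : (Fin n → ℝ) → Set (Fin n → ℝ)) (hF : FilippovOn F X)
    (S : Set (Fin n → ℝ)) (hSX : S ⊆ X) (hS : IsCompact S)
    (A : Set (Fin n → ℝ)) (hA : IsAttractorIn F S A) :
    S \ (A ∪ dualRep F S A) =
      {x ∈ S | omegaS F S {x} ⊆ A ∧ alphaS F S {x} ⊆ dualRep F S A} := by
  obtain ⟨-, U, hAU, -, rfl⟩ := hA
  have hFS : FilippovOn F S := hF.mono hSX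
  ext x
  refine ⟨fun ⟨hxS, hxAR⟩ => ⟨hxS, ?_, ?_⟩, fun ⟨hxS, hω, hα⟩ => ⟨hxS, ?_⟩⟩
  · by_contra hω
    exact hxAR (Or.inr ⟨hxS, hω⟩)
  · intro z hz
    refine ⟨alphaS_subset hS.isClosed hz, fun hzA => hxAR (Or.inl ?_)⟩
    obtain ⟨V, hV, hAV, hVU⟩ := exists_isOpen_inter_subset_of_subset_relInt hAU
    exact mem_omegaS_of_mem_alphaS hS hFS hz hV (hzA.trans hAV) hVU
  · rintro (hxA | hxR)
    · obtain ⟨z, hzA, hzα⟩ := exists_mem_omegaS_mem_alphaS hS hFS hxA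
      have hzU : z ∈ U := mem_of_mem_nhdsWithin (hAU hzA).1 (hAU hzA).2
      exact (hα hzα).2 (omegaS_mono (singleton_subset_iff.2 hzU))
    · exact hxR.2 hω

/-- The connecting region is exactly the set of points flowing from `R` to `A`. -/
theorem connecting_region_eq {n : ℕ} (X : Set (Fin n → ℝ)) (hX : IsCompact X)
    (F : (Fin n → ℝ) → Set (Fin n → ℝ)) (hF : FilippovOn F X)
    (S : Set (Fin n → ℝ)) (hSX : S ⊆ X) (hS : IsCompact S) (hSinv : IsInvSet F S)
    (A : Set (Fin n → ℝ)) (hA : IsAttractorIn F S A) :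
    S \ (A ∪ dualRep F S A) =
      {x ∈ S | omegaS F S {x} ⊆ A ∧ alphaS F S {x} ⊆ dualRep F S A} :=
  connecting_region_eq_general X F hF S hSX hS A hA
end

section
/- Semicontinuity of isolated invariant sets under perturbation: let F : X × [−1,1] → Set ℝⁿ satisfy the Filippov conditions on compact X ⊂ ℝⁿ, let Φ_λ be the solution multiflow of ẋ ∈ F(x,λ), and let N be a compact set that is an isolating neighborhood for every Φ_λ, λ ∈ I, a closed interval around 0. Set S_λ := Inv(N, Φ_λ). If λ_n → 0, x_n ∈ S_{λ_n}, and x_n → x, then x ∈ S_0. -/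
open Set MeasureTheory Filter Topology

open DIncl Set MeasureTheory Filter Topology

/-!
Upper semicontinuity makes `F` bounded on the compact set `X × [-1, 1]`, so the full-time orbits
through the points `xn k` are uniformly Lipschitz. By Tychonoff they converge pointwise, along an
ultrafilter, to a Lipschitz curve `ψ` in `N` through `x`. A difference quotient of an orbit is an
average of its velocities; for short times and large `k` these lie in a small closed convex
neighbourhood of `F (ψ u) 0`, and so do the difference quotients of `ψ` and, at the points where
`ψ` is differentiable (almost all, by Rademacher), its derivative. The fundamental theorem of
calculus for Lipschitz curves then makes `ψ` a full-time orbit of the unperturbed inclusion.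
-/

open scoped NNReal
open Metric

section LipschitzFTC

variable {E : Type*} [NormedAddCommGroup E] [NormedSpace ℝ E] [FiniteDimensional ℝ E]
  {C : ℝ≥0} {f : ℝ → E}

theorem LipschitzWith.intervalIntegrable_deriv (hf : LipschitzWith C f) (a b : ℝ) :
    IntervalIntegrable (deriv f) volume a b :=
  (intervalIntegrable_const (c := (C : ℝ))).mono_fun'
    (stronglyMeasurable_deriv f).aestronglyMeasurable
    (Eventually.of_forall fun _ => norm_deriv_le_of_lipschitz hf)

theorem LipschitzWith.integral_deriv_eq_sub (hf : LipschitzWith C f) (a b : ℝ) :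
    ∫ t in a..b, deriv f t = f b - f a := by
  refine (SeparatingDual.eq_iff_forall_dual_eq (R := ℝ)).2 fun g => ?_
  have hgf : LipschitzWith (‖g‖₊ * C) (g ∘ f) := g.lipschitz.comp hf
  rw [← g.intervalIntegral_comp_comm (hf.intervalIntegrable_deriv a b), map_sub]
  refine .trans (intervalIntegral.integral_congr_ae ?_)
    (hgf.lipschitzOnWith.absolutelyContinuousOnInterval.integral_deriv_eq_sub (a := a) (b := b))
  filter_upwards [hf.ae_differentiableAt_real] with t ht _
  exact (g.hasFDerivAt.comp_hasDerivAt t ht.hasDerivAt).deriv.symm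

end LipschitzFTC

namespace DIncl

theorem USCOn.isBounded_biUnion {α β : Type*} [PseudoMetricSpace α] [PseudoMetricSpace β]
    {G : α → Set β} {D : Set α} (hG : USCOn G D) (hD : IsCompact D)
    (hGb : ∀ p ∈ D, Bornology.IsBounded (G p)) : Bornology.IsBounded (⋃ p ∈ D, G p) := by
  refine hD.induction_on (p := fun s => Bornology.IsBounded (⋃ p ∈ s, G p)) (by simp)
    (fun s t hst ht => ht.subset (biUnion_subset_biUnion_left hst))
    (fun s t hs ht => by simpa only [biUnion_union] using hs.union ht) fun p hp => ?_
  obtain ⟨δ, hδ, hsub⟩ := hG p hp 1 one_pos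
  refine ⟨D ∩ ball p δ, inter_mem_nhdsWithin D (ball_mem_nhds p hδ),
    ((hGb p hp).thickening (δ := 1)).subset (iUnion₂_subset fun q hq => ?_)⟩
  intro z hz
  exact mem_thickening_iff.2 (hsub q hq.1 hq.2 hz)

variable {E : Type*} [NormedAddCommGroup E] [NormedSpace ℝ E]

theorem IsSolOn.lipschitzWith {G : E → Set E} {U : Set E} {ψ : ℝ → E} {M : ℝ≥0}
    (hψ : IsSolOn G U ψ univ) (hM : ∀ t, ∀ z ∈ G (ψ t), ‖z‖ ≤ M) : LipschitzWith M ψ := by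
  obtain ⟨-, v, -, hvG, hψv⟩ := hψ
  refine LipschitzWith.of_dist_le_mul fun s t => ?_
  rw [dist_eq_norm, hψv t trivial s trivial, add_sub_cancel_left, Real.dist_eq]
  exact intervalIntegral.norm_integral_le_of_norm_le_const_ae
    (hvG.mono fun τ hτ _ => hM τ _ (hτ trivial))

theorem IsSolOn.slope_mem [CompleteSpace E] {G : E → Set E} {U K : Set E} {I : Set ℝ}
    {ψ : ℝ → E} (hψ : IsSolOn G U ψ I) (hK : Convex ℝ K) (hKc : IsClosed K) {u w : ℝ}
    (huw : u < w) (hI : Icc u w ⊆ I) (hGK : ∀ τ ∈ Ioc u w, G (ψ τ) ⊆ K) :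
    slope ψ u w ∈ K := by
  obtain ⟨-, v, hv, hvG, hψv⟩ := hψ
  have huI : u ∈ I := hI (left_mem_Icc.2 huw.le)
  have hwI : w ∈ I := hI (right_mem_Icc.2 huw.le)
  have havg : ⨍ t in Ioc u w, v t ∈ K := by
    refine hK.set_average_mem hKc (by simpa using huw) measure_Ioc_lt_top.ne ?_
      ((intervalIntegrable_iff_integrableOn_Ioc_of_le huw.le).1 (hv u huI w hwI))
    refine (ae_restrict_iff' measurableSet_Ioc).2 (hvG.mono fun τ hτ hτuw => ?_)
    exact hGK τ hτuw (hτ (hI (Ioc_subset_Icc_self hτuw)))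
  rwa [setAverage_eq, Real.volume_real_Ioc_of_le huw.le, ← intervalIntegral.integral_of_le huw.le,
    ← add_sub_cancel_left (ψ u) (∫ t in u..w, v t), ← hψv u huI w hwI, ← slope_def_module] at havg

theorem deriv_mem_of_eventually_slope_mem {f : ℝ → E} {u : ℝ} {K : Set E}
    (hf : DifferentiableAt ℝ f u) (hK : IsClosed K) (hslope : ∀ᶠ w in 𝓝[>] u, slope f u w ∈ K) :
    deriv f u ∈ K :=
  hK.mem_of_tendsto ((hasDerivWithinAt_iff_tendsto_slope' self_notMem_Ioi).1
    hf.hasDerivAt.hasDerivWithinAt) hslope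

section Convergence

variable {E P ι : Type*} [NormedAddCommGroup E] [NormedSpace ℝ E] [FiniteDimensional ℝ E]
  [PseudoMetricSpace P] {G : E × P → Set E} {D : Set (E × P)} {U : Set E} {M : ℝ≥0}
  {l : Filter ι} [l.NeBot] {lam : ι → P} {lam₀ : P} {ψs : ι → ℝ → E} {ψ : ℝ → E}

theorem deriv_mem_of_tendsto (hG : USCOn G D) {u : ℝ} (hu₀ : (ψ u, lam₀) ∈ D)
    (hconv : Convex ℝ (G (ψ u, lam₀))) (hclosed : IsClosed (G (ψ u, lam₀)))
    (hlam : Tendsto lam l (𝓝 lam₀)) (hsol : ∀ k, IsSolOn (fun y => G (y, lam k)) U (ψs k) univ)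
    (hlip : ∀ k, LipschitzWith M (ψs k)) (hD : ∀ k t, (ψs k t, lam k) ∈ D)
    (hψ : Tendsto ψs l (𝓝 ψ)) (hu : DifferentiableAt ℝ ψ u) :
    deriv ψ u ∈ G (ψ u, lam₀) := by
  rw [← hclosed.closure_eq, closure_eq_iInter_cthickening]
  refine mem_iInter₂.2 fun ε hε => deriv_mem_of_eventually_slope_mem hu isClosed_cthickening ?_
  obtain ⟨δ, hδ, hGδ⟩ := hG _ hu₀ ε hε
  have hclose : ∀ᶠ k in l, dist (ψs k u) (ψ u) < δ / 2 ∧ dist (lam k) lam₀ < δ :=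
    ((tendsto_pi_nhds.1 hψ u).eventually (ball_mem_nhds _ (half_pos hδ))).and
      (hlam.eventually (ball_mem_nhds _ hδ))
  have hshort : ∀ᶠ w in 𝓝[>] u, (M : ℝ) * (w - u) < δ / 2 := by
    have : Tendsto (fun w => (M : ℝ) * (w - u)) (𝓝 u) (𝓝 0) := by
      simpa using ((tendsto_id (x := 𝓝 u)).sub_const u).const_mul (M : ℝ)
    exact eventually_nhdsWithin_of_eventually_nhds (this.eventually (gt_mem_nhds (half_pos hδ)))
  filter_upwards [self_mem_nhdsWithin, hshort] with w (huw : u < w) hw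
  refine isClosed_cthickening.mem_of_tendsto (f := fun k => slope (ψs k) u w) ?_
    (hclose.mono fun k hk => ?_)
  · simpa only [slope_def_module] using
      ((tendsto_pi_nhds.1 hψ w).sub (tendsto_pi_nhds.1 hψ u)).const_smul (w - u)⁻¹
  refine (hsol k).slope_mem (hconv.cthickening ε) isClosed_cthickening huw (subset_univ _)
    fun τ hτ z hz => ?_
  have hτδ : dist (ψs k τ) (ψ u) < δ := calc
    dist (ψs k τ) (ψ u) ≤ dist (ψs k τ) (ψs k u) + dist (ψs k u) (ψ u) := dist_triangle _ _ _
    _ < M * (w - u) + δ / 2 := by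
      refine add_lt_add_of_le_of_lt ((hlip k).dist_le_mul τ u |>.trans ?_) hk.1
      rw [Real.dist_eq, abs_of_pos (sub_pos.2 hτ.1)]
      gcongr
      exact hτ.2
    _ < δ := by linarith
  obtain ⟨y, hy, hzy⟩ := hGδ _ (hD k τ) (by rw [Prod.dist_eq]; exact max_lt hτδ hk.2) hz
  exact mem_cthickening_of_dist_le z y ε _ hy hzy.le

theorem isSolOn_of_tendsto (hG : USCOn G D)
    (hGc : ∀ p ∈ D, IsClosed (G p) ∧ Convex ℝ (G p)) (hM : ∀ p ∈ D, ∀ z ∈ G p, ‖z‖ ≤ M)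
    (hU : IsClosed U) (hlam : Tendsto lam l (𝓝 lam₀))
    (hsol : ∀ k, IsSolOn (fun y => G (y, lam k)) U (ψs k) univ)
    (hD : ∀ k t, (ψs k t, lam k) ∈ D) (hD₀ : ∀ t, (ψ t, lam₀) ∈ D) (hψ : Tendsto ψs l (𝓝 ψ)) :
    IsSolOn (fun y => G (y, lam₀)) U ψ univ := by
  have hlip k : LipschitzWith M (ψs k) := (hsol k).lipschitzWith fun t => hM _ (hD k t)
  have hψlip : LipschitzWith M ψ :=
    (isClosed_setOfPred_lipschitzWith M).mem_of_tendsto hψ (Eventually.of_forall hlip)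
  refine ⟨fun t _ => hU.mem_of_tendsto (tendsto_pi_nhds.1 hψ t)
      (Eventually.of_forall fun k => (hsol k).1 t trivial),
    deriv ψ, fun a _ b _ => hψlip.intervalIntegrable_deriv a b, ?_,
    fun a _ b _ => by rw [hψlip.integral_deriv_eq_sub]; abel⟩
  filter_upwards [hψlip.ae_differentiableAt_real] with t ht _
  exact deriv_mem_of_tendsto hG (hD₀ t) (hGc _ (hD₀ t)).2 (hGc _ (hD₀ t)).1 hlam hsol hlip hD
    hψ ht

end Convergence

end DIncl

theorem inv_semicontinuous_general {n : ℕ} (X : Set (Fin n → ℝ)) (hX : IsCompact X)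
    (F : (Fin n → ℝ) → ℝ → Set (Fin n → ℝ))
    (hF : FilippovOn (fun p : (Fin n → ℝ) × ℝ => F p.1 p.2) (X ×ˢ Icc (-1:ℝ) 1))
    (N : Set (Fin n → ℝ)) (hNX : N ⊆ X) (hN : IsCompact N)
    (a b : ℝ) (hI : Icc a b ⊆ Icc (-1:ℝ) 1)
    (lamn : ℕ → ℝ) (hlamI : ∀ k, lamn k ∈ Icc a b)
    (hlam : Tendsto lamn atTop (nhds 0))
    (xn : ℕ → (Fin n → ℝ)) (hxn : ∀ k, xn k ∈ maxInv (F · (lamn k)) N)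
    (x : Fin n → ℝ) (hx : Tendsto xn atTop (nhds x)) :
    x ∈ maxInv (F · 0) N := by
  obtain ⟨C, hC⟩ := isBounded_iff_forall_norm_le.1 <|
    hF.1.isBounded_biUnion (hX.prod isCompact_Icc) fun p hp => (hF.2 p hp).1.isBounded
  choose ψs hψs hψs₀ using hxn
  let 𝒰 := Ultrafilter.of (atTop : Filter ℕ)
  obtain ⟨ψ, hψN, hψ⟩ := (isCompact_univ_pi fun _ : ℝ => hN).ultrafilter_le_nhds (𝒰.map ψs) <| by
    rw [Ultrafilter.coe_map, le_principal_iff, mem_map]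
    exact univ_mem' fun k t _ => (hψs k).1 t trivial
  have h𝒰 : (𝒰 : Filter ℕ) ≤ atTop := Ultrafilter.of_le _
  have hψsol : IsSolOn (F · 0) N ψ univ :=
    isSolOn_of_tendsto (M := C.toNNReal) hF.1
      (fun p hp => ⟨(hF.2 p hp).1.isClosed, (hF.2 p hp).2.1⟩)
      (fun p hp z hz => (hC z (mem_biUnion hp hz)).trans (Real.le_coe_toNNReal C))
      hN.isClosed (hlam.mono_left h𝒰) hψs
      (fun k t => ⟨hNX ((hψs k).1 t trivial), hI (hlamI k)⟩)
      (fun t => ⟨hNX (hψN t trivial), by norm_num⟩) hψ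
  refine ⟨ψ, hψsol, tendsto_nhds_unique (tendsto_pi_nhds.1 hψ 0) ?_⟩
  simpa only [hψs₀] using hx.mono_left h𝒰

/-- Semicontinuity of isolated invariant sets under perturbation. -/
theorem inv_semicontinuous {n : ℕ} (X : Set (Fin n → ℝ)) (hX : IsCompact X)
    (F : (Fin n → ℝ) → ℝ → Set (Fin n → ℝ))
    (hF : FilippovOn (fun p : (Fin n → ℝ) × ℝ => F p.1 p.2) (X ×ˢ Icc (-1:ℝ) 1))
    (N : Set (Fin n → ℝ)) (hNX : N ⊆ X) (hN : IsCompact N)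
    (a b : ℝ) (ha : a < 0) (hb : 0 < b) (hI : Icc a b ⊆ Icc (-1:ℝ) 1)
    (hiso : ∀ lam ∈ Icc a b, maxInv (F · lam) N ⊆ relInt X N)
    (lamn : ℕ → ℝ) (hlamI : ∀ k, lamn k ∈ Icc a b)
    (hlam : Tendsto lamn atTop (nhds 0))
    (xn : ℕ → (Fin n → ℝ)) (hxn : ∀ k, xn k ∈ maxInv (F · (lamn k)) N)
    (x : Fin n → ℝ) (hx : Tendsto xn atTop (nhds x)) :
    x ∈ maxInv (F · 0) N :=
  inv_semicontinuous_general X hX F hF N hNX hN a b hI lamn hlamI hlam xn hxn x hx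
end
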